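/- For every iteration index l and every odd machine index k with 1 < k < K, there exists a subgradient v of Q_k at ζ_k^{l+1} such that v + μ_k^{l+1} C − γ_{k−1}^{l+1} + γ_k^{l+1} + s_k^{l+1} = 0, where s_k^{l+1} = ρ(ζ_{k−1}^{l+1} − ζ_{k−1}^l) + ρ(ζ_{k+1}^{l+1} − ζ_{k+1}^l) is the dual residual of head machine k. In other words, each interior head machine satisfies the dual feasibility condition up to its dual residual s_k^{l+1}. -/

import Mathlib

open Finset Filter
open scoped RealInnerProductSpace

noncomputable section

def IsSubgrad {d : ℕ} (f : EuclideanSpace ℝ (Fin d) → ℝ)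
    (x v : EuclideanSpace ℝ (Fin d)) : Prop :=
  ∀ z, f x + ⟪v, z - x⟫ ≤ f z

/-!
The update of machine `k` minimizes `Q k + g`, where the penalty `g` is a quadratic function
of `ζ`. Comparing the minimizer `x` with `x + t • (z - x)`, convexity of `Q k` and the exact
second-order expansion of `g` give `t * (Q k x - Q k z - ⟪∇g x, z - x⟫) ≤ t ^ 2 * B`; dividing
by `t` and letting `t → 0⁺` shows that `-∇g x` is a subgradient of `Q k` at `x`. The multiplier
updates turn `∇g x` into `μ (l+1) k • C - γ (l+1) (k-1) + γ (l+1) k` plus the dual residual.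
-/
section

open Set
open scoped Topology

theorem ConvexOn.sum {𝕜 E ι : Type*} [Field 𝕜] [LinearOrder 𝕜] [IsStrictOrderedRing 𝕜]
    [AddCommGroup E] [Module 𝕜 E] {s : Set E} (hs : Convex 𝕜 s) (t : Finset ι)
    {f : ι → E → 𝕜} (hf : ∀ i ∈ t, ConvexOn 𝕜 s (f i)) :
    ConvexOn 𝕜 s fun x ↦ ∑ i ∈ t, f i x := by
  classical
  induction t using Finset.induction_on with
  | empty => simpa using convexOn_const 0 hs
  | insert i t hi ih =>
    simp only [Finset.sum_insert hi]
    exact (hf i (Finset.mem_insert_self i t)).add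
      (ih fun j hj ↦ hf j (Finset.mem_insert_of_mem hj))

theorem convexOn_sq_norm_sub {E F : Type*} [NormedAddCommGroup E] [NormedSpace ℝ E]
    [NormedAddCommGroup F] [NormedSpace ℝ F] (y : F) (A : E →ₗ[ℝ] F) :
    ConvexOn ℝ univ fun x ↦ ‖y - A x‖ ^ 2 := by
  have hnorm : ConvexOn ℝ univ fun u : F ↦ ‖u‖ ^ 2 :=
    (convexOn_norm convex_univ).pow (fun _ _ ↦ norm_nonneg _) 2
  have h := hnorm.comp_affineMap (AffineMap.const ℝ E y - A.toAffineMap)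
  rwa [preimage_univ] at h

theorem convexOn_weighted_abs_sum {d : ℕ} {ω : Fin d → ℝ} (hω : ∀ j, 0 ≤ ω j) :
    ConvexOn ℝ univ fun x : EuclideanSpace ℝ (Fin d) ↦ ∑ j, ω j * |x j| :=
  ConvexOn.sum convex_univ _ fun j _ ↦ by
    simpa [Function.comp_def] using ((convexOn_norm convex_univ).comp_linearMap
      (EuclideanSpace.proj (𝕜 := ℝ) j).toLinearMap).smul (hω j)

theorem convexOn_lasso {m d : ℕ} (y : EuclideanSpace ℝ (Fin m)) (A : Matrix (Fin m) (Fin d) ℝ)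
    {c lam : ℝ} (hc : 0 ≤ c) (hlam : 0 ≤ lam) {ω : Fin d → ℝ} (hω : ∀ j, 0 ≤ ω j) :
    ConvexOn ℝ univ fun x : EuclideanSpace ℝ (Fin d) ↦
      c * ‖y - A.toEuclideanLin x‖ ^ 2 + lam * ∑ j, ω j * |x j| :=
  ((convexOn_sq_norm_sub y _).smul hc).add ((convexOn_weighted_abs_sum hω).smul hlam)

theorem le_zero_of_forall_le_mul {a b : ℝ} (h : ∀ t ∈ Ioc (0 : ℝ) 1, a ≤ t * b) :
    a ≤ 0 := by
  have hlim : Tendsto (fun t ↦ t * b) (𝓝[>] 0) (𝓝 0) := by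
    simpa using (tendsto_id.mul_const b).mono_left (nhdsWithin_le_nhds (a := (0 : ℝ)))
  exact ge_of_tendsto hlim (eventually_of_mem (Ioc_mem_nhdsGT zero_lt_one) h)

theorem isSubgrad_neg_of_minimizes_add {d : ℕ} {f g B : EuclideanSpace ℝ (Fin d) → ℝ}
    {x G : EuclideanSpace ℝ (Fin d)} (hf : ConvexOn ℝ univ f)
    (hg : ∀ w (t : ℝ), g (x + t • w) ≤ g x + t * ⟪G, w⟫ + t ^ 2 * B w)
    (hmin : ∀ z, f x + g x ≤ f z + g z) :
    IsSubgrad f x (-G) := by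
  intro z
  suffices f x - f z - ⟪G, z - x⟫ ≤ 0 by rw [inner_neg_left]; linarith
  refine le_zero_of_forall_le_mul (b := B (z - x)) fun t ⟨ht0, ht1⟩ ↦ ?_
  have hseg : f (x + t • (z - x)) ≤ (1 - t) * f x + t * f z := by
    have h := hf.2 (mem_univ x) (mem_univ z) (sub_nonneg.2 ht1) ht0.le (by ring)
    rwa [show (1 - t) • x + t • z = x + t • (z - x) by module, smul_eq_mul, smul_eq_mul] at h
  have hstep : t * (f x - f z - ⟪G, z - x⟫) ≤ t * (t * B (z - x)) := by
    linarith [hmin (x + t • (z - x)), hg (z - x) t]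
  exact le_of_mul_le_mul_left hstep ht0

def interiorPenalty {E : Type*} [NormedAddCommGroup E] [InnerProductSpace ℝ E]
    (m ρ : ℝ) (C ga gb a b ζ : E) : ℝ :=
  m * ⟪C, ζ⟫ + (ρ / 2) * ⟪C, ζ⟫ ^ 2 + ⟪ga, a - ζ⟫ + ⟪gb, ζ - b⟫
    + (ρ / 2) * ‖a - ζ‖ ^ 2 + (ρ / 2) * ‖ζ - b‖ ^ 2

theorem interiorPenalty_add_smul {E : Type*} [NormedAddCommGroup E] [InnerProductSpace ℝ E]
    (m ρ : ℝ) (C ga gb a b x w : E) (t : ℝ) :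
    interiorPenalty m ρ C ga gb a b (x + t • w) = interiorPenalty m ρ C ga gb a b x
      + t * ⟪m • C + (ρ * ⟪C, x⟫) • C - ga + gb + ρ • (x - a) + ρ • (x - b), w⟫
      + t ^ 2 * ((ρ / 2) * ⟪C, w⟫ ^ 2 + ρ * ‖w‖ ^ 2) := by
  rw [interiorPenalty, interiorPenalty, show a - (x + t • w) = (a - x) - t • w by abel,
    show x + t • w - b = (x - b) + t • w by abel, norm_sub_sq_real, norm_add_sq_real,
    norm_smul, mul_pow, Real.norm_eq_abs, sq_abs]
  simp only [inner_add_right, inner_sub_right, inner_add_left, inner_sub_left,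
    real_inner_smul_left, real_inner_smul_right]
  ring

end

theorem dsgcdmm_head_dual_residual_interior_general
    (d K : ℕ)
    (n : ℕ → ℕ)
    (y : ∀ k, EuclideanSpace ℝ (Fin (n k)))
    (P : ∀ k, Matrix (Fin (n k)) (Fin d) ℝ)
    (lam : ℝ) (hlam : 0 ≤ lam)
    (ω : ℕ → Fin d → ℝ) (hω : ∀ k ∈ Icc 1 K, ∀ j, 0 ≤ ω k j)
    (C : EuclideanSpace ℝ (Fin d))
    (Q : ℕ → EuclideanSpace ℝ (Fin d) → ℝ)
    (hQ : ∀ k, ∀ x : EuclideanSpace ℝ (Fin d), Q k x =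
      (1 / (2 * (n k : ℝ))) * ‖y k - (P k).toEuclideanLin x‖ ^ 2
        + lam * ∑ j, ω k j * |x j|)
    (ρ : ℝ)
    (ζ : ℕ → ℕ → EuclideanSpace ℝ (Fin d))
    (μ : ℕ → ℕ → ℝ)
    (γ : ℕ → ℕ → EuclideanSpace ℝ (Fin d))
    (hdynodd : ∀ l : ℕ, ∀ k, Odd k → 1 < k → k < K → ∀ z : EuclideanSpace ℝ (Fin d),
      Q k (ζ (l+1) k) + μ l k * ⟪C, ζ (l+1) k⟫ + (ρ/2) * ⟪C, ζ (l+1) k⟫ ^ 2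
          + ⟪γ l (k-1), ζ l (k-1) - ζ (l+1) k⟫ + ⟪γ l k, ζ (l+1) k - ζ l (k+1)⟫
          + (ρ/2) * ‖ζ l (k-1) - ζ (l+1) k‖ ^ 2 + (ρ/2) * ‖ζ (l+1) k - ζ l (k+1)‖ ^ 2
        ≤ Q k z + μ l k * ⟪C, z⟫ + (ρ/2) * ⟪C, z⟫ ^ 2
          + ⟪γ l (k-1), ζ l (k-1) - z⟫ + ⟪γ l k, z - ζ l (k+1)⟫
          + (ρ/2) * ‖ζ l (k-1) - z‖ ^ 2 + (ρ/2) * ‖z - ζ l (k+1)‖ ^ 2)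
    (hμ : ∀ l : ℕ, ∀ k ∈ Icc 1 K, μ (l+1) k = μ l k + ρ * ⟪C, ζ (l+1) k⟫)
    (hγ : ∀ l : ℕ, ∀ k ∈ Icc 1 (K-1),
      γ (l+1) k = γ l k + ρ • (ζ (l+1) k - ζ (l+1) (k+1)))
    :
    ∀ l : ℕ, ∀ k, Odd k → 1 < k → k < K →
      ∃ v : EuclideanSpace ℝ (Fin d), IsSubgrad (Q k) (ζ (l+1) k) v ∧
        v + μ (l+1) k • C - γ (l+1) (k-1) + γ (l+1) k
          + (ρ • (ζ (l+1) (k-1) - ζ l (k-1)) + ρ • (ζ (l+1) (k+1) - ζ l (k+1))) = 0 := by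
  intro l k hk_odd hk_gt hk_lt
  have hk : k ∈ Icc 1 K := mem_Icc.2 ⟨by omega, by omega⟩
  have hk_inner : k ∈ Icc 1 (K - 1) := mem_Icc.2 ⟨by omega, by omega⟩
  have hk_prev : k - 1 ∈ Icc 1 (K - 1) := mem_Icc.2 ⟨by omega, by omega⟩
  have hQ_convex : ConvexOn ℝ Set.univ (Q k) := by
    rw [show Q k = _ from funext (hQ k)]
    exact convexOn_lasso (y k) (P k) (by positivity) hlam (hω k hk)
  have hsub := isSubgrad_neg_of_minimizes_add hQ_convex
    (x := ζ (l+1) k)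
    (g := interiorPenalty (μ l k) ρ C (γ l (k-1)) (γ l k) (ζ l (k-1)) (ζ l (k+1)))
    (fun w t ↦ (interiorPenalty_add_smul _ _ _ _ _ _ _ _ w t).le)
    (fun z ↦ by simp only [interiorPenalty]; linarith [hdynodd l k hk_odd hk_gt hk_lt z])
  refine ⟨_, hsub, ?_⟩
  have hγ_prev := hγ l (k-1) hk_prev
  rw [Nat.sub_add_cancel hk_gt.le] at hγ_prev
  rw [hμ l k hk, hγ_prev, hγ l k hk_inner]
  module

/-- each interior head machine (odd k with 1 < k < K) satisfies the dual feasibility condition up to its dual residual. -/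
theorem dsgcdmm_head_dual_residual_interior
    (d K : ℕ) (hd : 1 ≤ d) (hK : 2 ≤ K) (hKeven : Even K)
    (n : ℕ → ℕ) (hn : ∀ k ∈ Icc 1 K, 1 ≤ n k)
    (y : ∀ k, EuclideanSpace ℝ (Fin (n k)))
    (P : ∀ k, Matrix (Fin (n k)) (Fin d) ℝ)
    (lam : ℝ) (hlam : 0 ≤ lam)
    (ω : ℕ → Fin d → ℝ) (hω : ∀ k ∈ Icc 1 K, ∀ j, 0 ≤ ω k j)
    (C : EuclideanSpace ℝ (Fin d))
    (Q : ℕ → EuclideanSpace ℝ (Fin d) → ℝ)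
    (hQ : ∀ k, ∀ x : EuclideanSpace ℝ (Fin d), Q k x =
      (1 / (2 * (n k : ℝ))) * ‖y k - (P k).toEuclideanLin x‖ ^ 2
        + lam * ∑ j, ω k j * |x j|)
    (ρ : ℝ) (hρ : 0 < ρ)
    (ζ : ℕ → ℕ → EuclideanSpace ℝ (Fin d))
    (μ : ℕ → ℕ → ℝ)
    (γ : ℕ → ℕ → EuclideanSpace ℝ (Fin d))
    (hdyn1 : ∀ l : ℕ, ∀ z : EuclideanSpace ℝ (Fin d),
      Q 1 (ζ (l+1) 1) + μ l 1 * ⟪C, ζ (l+1) 1⟫ + (ρ/2) * ⟪C, ζ (l+1) 1⟫ ^ 2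
          + ⟪γ l 1, ζ (l+1) 1 - ζ l 2⟫ + (ρ/2) * ‖ζ (l+1) 1 - ζ l 2‖ ^ 2
        ≤ Q 1 z + μ l 1 * ⟪C, z⟫ + (ρ/2) * ⟪C, z⟫ ^ 2
          + ⟪γ l 1, z - ζ l 2⟫ + (ρ/2) * ‖z - ζ l 2‖ ^ 2)
    (hdynodd : ∀ l : ℕ, ∀ k, Odd k → 1 < k → k < K → ∀ z : EuclideanSpace ℝ (Fin d),
      Q k (ζ (l+1) k) + μ l k * ⟪C, ζ (l+1) k⟫ + (ρ/2) * ⟪C, ζ (l+1) k⟫ ^ 2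
          + ⟪γ l (k-1), ζ l (k-1) - ζ (l+1) k⟫ + ⟪γ l k, ζ (l+1) k - ζ l (k+1)⟫
          + (ρ/2) * ‖ζ l (k-1) - ζ (l+1) k‖ ^ 2 + (ρ/2) * ‖ζ (l+1) k - ζ l (k+1)‖ ^ 2
        ≤ Q k z + μ l k * ⟪C, z⟫ + (ρ/2) * ⟪C, z⟫ ^ 2
          + ⟪γ l (k-1), ζ l (k-1) - z⟫ + ⟪γ l k, z - ζ l (k+1)⟫
          + (ρ/2) * ‖ζ l (k-1) - z‖ ^ 2 + (ρ/2) * ‖z - ζ l (k+1)‖ ^ 2)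
    (hdyneven : ∀ l : ℕ, ∀ k, Even k → 0 < k → k < K → ∀ z : EuclideanSpace ℝ (Fin d),
      Q k (ζ (l+1) k) + μ l k * ⟪C, ζ (l+1) k⟫ + (ρ/2) * ⟪C, ζ (l+1) k⟫ ^ 2
          + ⟪γ l (k-1), ζ (l+1) (k-1) - ζ (l+1) k⟫ + ⟪γ l k, ζ (l+1) k - ζ (l+1) (k+1)⟫
          + (ρ/2) * ‖ζ (l+1) (k-1) - ζ (l+1) k‖ ^ 2 + (ρ/2) * ‖ζ (l+1) k - ζ (l+1) (k+1)‖ ^ 2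
        ≤ Q k z + μ l k * ⟪C, z⟫ + (ρ/2) * ⟪C, z⟫ ^ 2
          + ⟪γ l (k-1), ζ (l+1) (k-1) - z⟫ + ⟪γ l k, z - ζ (l+1) (k+1)⟫
          + (ρ/2) * ‖ζ (l+1) (k-1) - z‖ ^ 2 + (ρ/2) * ‖z - ζ (l+1) (k+1)‖ ^ 2)
    (hdynK : ∀ l : ℕ, ∀ z : EuclideanSpace ℝ (Fin d),
      Q K (ζ (l+1) K) + μ l K * ⟪C, ζ (l+1) K⟫ + (ρ/2) * ⟪C, ζ (l+1) K⟫ ^ 2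
          + ⟪γ l (K-1), ζ (l+1) (K-1) - ζ (l+1) K⟫ + (ρ/2) * ‖ζ (l+1) (K-1) - ζ (l+1) K‖ ^ 2
        ≤ Q K z + μ l K * ⟪C, z⟫ + (ρ/2) * ⟪C, z⟫ ^ 2
          + ⟪γ l (K-1), ζ (l+1) (K-1) - z⟫ + (ρ/2) * ‖ζ (l+1) (K-1) - z‖ ^ 2)
    (hμ : ∀ l : ℕ, ∀ k ∈ Icc 1 K, μ (l+1) k = μ l k + ρ * ⟪C, ζ (l+1) k⟫)
    (hγ : ∀ l : ℕ, ∀ k ∈ Icc 1 (K-1),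
      γ (l+1) k = γ l k + ρ • (ζ (l+1) k - ζ (l+1) (k+1)))
    :
    ∀ l : ℕ, ∀ k, Odd k → 1 < k → k < K →
      ∃ v : EuclideanSpace ℝ (Fin d), IsSubgrad (Q k) (ζ (l+1) k) v ∧
        v + μ (l+1) k • C - γ (l+1) (k-1) + γ (l+1) k
          + (ρ • (ζ (l+1) (k-1) - ζ l (k-1)) + ρ • (ζ (l+1) (k+1) - ζ l (k+1))) = 0 :=
  dsgcdmm_head_dual_residual_interior_general d K n y P lam hlam ω hω C Q hQ ρ ζ μ γ hdynodd hμ hγ
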